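/- arXiv:2312.04006 — 3 statements merged into one kernel-verified Lean document; each statement's English description precedes it below -/
import Mathlib

section
/- Let 𝒢 be a nonempty subset of ℝ^d × L²([0,T]×Ω; ℝ^{d×m}) and define 𝒥_B^t(x,φ) = x + ∫₀^t φ_τ dB_τ for a.e.-fixed t ∈ [0,T], where B is an m-dimensional Brownian motion. Let ∫_Θ^t 𝒢 dB be the unique F_t-measurable set-valued random variable whose square-integrable selection set equals the closed decomposable hull of 𝒥_B^t(𝒢). Then the process (∫_Θ^t 𝒢 dB)_{t∈[0,T]} is a set-valued 𝔽-submartingale: E[∫_Θ^t 𝒢 dB | F_s] ⊇ ∫_Θ^s 𝒢 dB a.s. for all 0 ≤ s ≤ t ≤ T. -/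
open MeasureTheory Set Filter Topology Bornology
open scoped ENNReal NNReal Pointwise

noncomputable section

/-- A set-valued random variable w.r.t. the σ-algebra `𝒜`: nonempty closed values and
measurability of hitting sets of closed sets. -/
def IsSVRV {Ω X : Type*} [TopologicalSpace X] (𝒜 : MeasurableSpace Ω) (F : Ω → Set X) : Prop :=
  (∀ ω, (F ω).Nonempty ∧ IsClosed (F ω)) ∧
    ∀ C : Set X, IsClosed C → MeasurableSet[𝒜] {ω | (F ω ∩ C).Nonempty}

/-- The set `S^p_F(𝒜)` of `𝒜`-measurable `p`-integrable selections of `F`,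
as a subset of `Lp X p μ`. -/
def sel {Ω X : Type*} {m : MeasurableSpace Ω} [NormedAddCommGroup X]
    (𝒜 : MeasurableSpace Ω) (μ : @MeasureTheory.Measure Ω m) (p : ℝ≥0∞) (F : Ω → Set X) :
    Set (Lp X p μ) :=
  {f | AEStronglyMeasurable[𝒜] f μ ∧ ∀ᵐ ω ∂μ, f ω ∈ F ω}

/-- Decomposability of a family of `Lp` functions w.r.t. the σ-algebra `𝒜`:
`1_A f₁ + 1_{Ω∖A} f₂ ∈ M` for all `f₁ f₂ ∈ M` and `A` `𝒜`-measurable. -/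
def Decomp {Ω X : Type*} {m : MeasurableSpace Ω} [NormedAddCommGroup X]
    (𝒜 : MeasurableSpace Ω) (μ : @MeasureTheory.Measure Ω m) (p : ℝ≥0∞)
    (M : Set (Lp X p μ)) : Prop :=
  ∀ f₁ ∈ M, ∀ f₂ ∈ M, ∀ A : Set Ω, MeasurableSet[𝒜] A →
    ∃ g ∈ M, ∀ᵐ ω ∂μ, (ω ∈ A → g ω = f₁ ω) ∧ (ω ∉ A → g ω = f₂ ω)

/-- The closed decomposable hull of `M` in `Lp X p μ`, w.r.t. the σ-algebra `𝒜`: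
the smallest closed `𝒜`-decomposable set containing `M`. -/
def decClosure {Ω X : Type*} {m : MeasurableSpace Ω} [NormedAddCommGroup X]
    (𝒜 : MeasurableSpace Ω) (μ : @MeasureTheory.Measure Ω m) (p : ℝ≥0∞) [Fact (1 ≤ p)]
    (M : Set (Lp X p μ)) : Set (Lp X p μ) :=
  ⋂₀ {N : Set (Lp X p μ) | M ⊆ N ∧ IsClosed N ∧ Decomp 𝒜 μ p N}

/-- The set of conditional expectations `E[f|𝒜]` of members `f` of `M ⊆ Lp X p μ`. -/
def ceSel {Ω X : Type*} {m : MeasurableSpace Ω} [NormedAddCommGroup X]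
    [NormedSpace ℝ X] [CompleteSpace X]
    (𝒜 : MeasurableSpace Ω) (μ : @MeasureTheory.Measure Ω m) (p : ℝ≥0∞)
    (M : Set (Lp X p μ)) : Set (Lp X p μ) :=
  {h | ∃ f ∈ M, ⇑h =ᵐ[μ] μ[(⇑f)|𝒜]}

/-- Set-valued `𝔽`-submartingale (Hiai–Umegaki), expressed through the selection
characterization of the set-valued conditional expectation:
`S_{F_s}(ℱ s) ⊆ S_{E[F_t|ℱ s]}(ℱ s) = cl{E[f|ℱ s] : f ∈ S_{F_t}(ℱ t)}`. -/
def SVSubmartingale {Ω X ι : Type*} [Preorder ι] {m : MeasurableSpace Ω}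
    [NormedAddCommGroup X] [NormedSpace ℝ X] [CompleteSpace X]
    (ℱ : MeasureTheory.Filtration ι m) (μ : @MeasureTheory.Measure Ω m) (p : ℝ≥0∞)
    [Fact (1 ≤ p)] (F : ι → Ω → Set X) : Prop :=
  ∀ s t : ι, s ≤ t →
    sel (ℱ s) μ p (F s) ⊆ closure (ceSel (ℱ s) μ p (sel (ℱ t) μ p (F t)))

/-- Set-valued `𝔽`-martingale (Hiai–Umegaki), via the selection characterization
`S_{F_s}(ℱ s) = S_{E[F_t|ℱ s]}(ℱ s) = cl{E[f|ℱ s] : f ∈ S_{F_t}(ℱ t)}`. -/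
def SVMartingale {Ω X ι : Type*} [Preorder ι] {m : MeasurableSpace Ω}
    [NormedAddCommGroup X] [NormedSpace ℝ X] [CompleteSpace X]
    (ℱ : MeasureTheory.Filtration ι m) (μ : @MeasureTheory.Measure Ω m) (p : ℝ≥0∞)
    [Fact (1 ≤ p)] (F : ι → Ω → Set X) : Prop :=
  ∀ s t : ι, s ≤ t →
    sel (ℱ s) μ p (F s) = closure (ceSel (ℱ s) μ p (sel (ℱ t) μ p (F t)))

/-- The Aumann expectation `E[F] = cl{∫ f dμ : f ∈ S¹_F}` of a set-valued random variable. -/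
def aumannExp {Ω X : Type*} {m : MeasurableSpace Ω} [NormedAddCommGroup X]
    [NormedSpace ℝ X] [CompleteSpace X]
    (μ : @MeasureTheory.Measure Ω m) (F : Ω → Set X) : Set X :=
  closure {x | ∃ f ∈ sel m μ 1 F, ∫ ω, f ω ∂μ = x}

/-- Reflexivity of a normed space: the canonical embedding into the double dual
is surjective. -/
def IsReflexive (X : Type*) [NormedAddCommGroup X] [NormedSpace ℝ X] : Prop :=
  Function.Surjective ⇑(NormedSpace.inclusionInDoubleDual ℝ X)


section Aux

variable {Ω X : Type*} {m : MeasurableSpace Ω} [NormedAddCommGroup X]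

lemma decClosure_subset_of_mem {μ : @MeasureTheory.Measure Ω m} {p : ℝ≥0∞} [Fact (1 ≤ p)]
    {𝒜 : MeasurableSpace Ω} {M N : Set (Lp X p μ)}
    (hN : M ⊆ N ∧ IsClosed N ∧ Decomp 𝒜 μ p N) :
    decClosure 𝒜 μ p M ⊆ N :=
  Set.sInter_subset_of_mem hN

lemma subset_decClosure {μ : @MeasureTheory.Measure Ω m} {p : ℝ≥0∞} [Fact (1 ≤ p)]
    {𝒜 : MeasurableSpace Ω} {M : Set (Lp X p μ)} :
    M ⊆ decClosure 𝒜 μ p M :=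
  Set.subset_sInter fun _ hN => hN.1

/-- Pointwise a.e. description of the `g` produced by decomposability. -/
lemma combo_ae_eq {μ : @MeasureTheory.Measure Ω m} {p : ℝ≥0∞}
    {f₁ f₂ g : Lp X p μ} {A : Set Ω}
    (hg : ∀ᵐ ω ∂μ, (ω ∈ A → g ω = f₁ ω) ∧ (ω ∉ A → g ω = f₂ ω)) :
    ⇑g =ᵐ[μ] A.indicator ⇑f₁ + Aᶜ.indicator ⇑f₂ := by
  filter_upwards [hg] with ω hω
  by_cases hA : ω ∈ A
  · simp [Set.indicator_of_mem hA, Set.indicator_of_notMem (Set.notMem_compl_iff.mpr hA),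
      hω.1 hA]
  · simp [Set.indicator_of_notMem hA, Set.indicator_of_mem (Set.mem_compl hA), hω.2 hA]

lemma memℒp_combo {μ : @MeasureTheory.Measure Ω m} {p : ℝ≥0∞}
    (f₁ f₂ : Lp X p μ) {A : Set Ω} (hA : MeasurableSet A) :
    MemLp (A.indicator ⇑f₁ + Aᶜ.indicator ⇑f₂) p μ :=
  ((Lp.memLp f₁).indicator hA).add ((Lp.memLp f₂).indicator hA.compl)

lemma combo_prop {μ : @MeasureTheory.Measure Ω m} {p : ℝ≥0∞}
    {f₁ f₂ h : Lp X p μ} {A : Set Ω}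
    (hh : ⇑h =ᵐ[μ] A.indicator ⇑f₁ + Aᶜ.indicator ⇑f₂) :
    ∀ᵐ ω ∂μ, (ω ∈ A → h ω = f₁ ω) ∧ (ω ∉ A → h ω = f₂ ω) := by
  filter_upwards [hh] with ω hω
  constructor
  · intro hA
    simp [hω, Set.indicator_of_mem hA, Set.indicator_of_notMem (Set.notMem_compl_iff.mpr hA)]
  · intro hA
    simp [hω, Set.indicator_of_notMem hA, Set.indicator_of_mem (Set.mem_compl hA)]

/-- The closed decomposable hull is decomposable. -/
lemma decomp_decClosure {μ : @MeasureTheory.Measure Ω m} {p : ℝ≥0∞} [Fact (1 ≤ p)]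
    {𝒜 : MeasurableSpace Ω} (h𝒜 : 𝒜 ≤ m) (M : Set (Lp X p μ)) :
    Decomp 𝒜 μ p (decClosure 𝒜 μ p M) := by
  intro f₁ hf₁ f₂ hf₂ A hA
  have hAm : MeasurableSet[m] A := h𝒜 A hA
  have hmem := memℒp_combo f₁ f₂ hAm
  refine ⟨hmem.toLp _, ?_, combo_prop (hmem.coeFn_toLp)⟩
  intro N hN
  obtain ⟨hMN, hNc, hNd⟩ := hN
  obtain ⟨g, hgN, hg⟩ := hNd f₁ (hf₁ N ⟨hMN, hNc, hNd⟩) f₂ (hf₂ N ⟨hMN, hNc, hNd⟩) A hA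
  have : hmem.toLp _ = g :=
    Lp.ext ((hmem.coeFn_toLp).trans (combo_ae_eq hg).symm)
  rw [this]; exact hgN

/-- The closure of a decomposable set is decomposable. -/
lemma Decomp.closure {μ : @MeasureTheory.Measure Ω m} {p : ℝ≥0∞} [Fact (1 ≤ p)]
    {𝒜 : MeasurableSpace Ω} (h𝒜 : 𝒜 ≤ m) {M : Set (Lp X p μ)}
    (hM : Decomp 𝒜 μ p M) : Decomp 𝒜 μ p (closure M) := by
  intro h₁ hh₁ h₂ hh₂ A hA
  have hAm : MeasurableSet[m] A := h𝒜 A hA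
  rw [mem_closure_iff_seq_limit] at hh₁ hh₂
  obtain ⟨u, huM, hu⟩ := hh₁
  obtain ⟨v, hvM, hv⟩ := hh₂
  choose g hgM hg using fun n => hM (u n) (huM n) (v n) (hvM n) A hA
  have hmem := memℒp_combo h₁ h₂ hAm
  set gLim : Lp X p μ := hmem.toLp _ with hgLim
  have hp1 : (1 : ℝ≥0∞) ≤ p := Fact.out
  -- distance estimate
  have hdist : ∀ n, dist (g n) gLim ≤ dist (u n) h₁ + dist (v n) h₂ := by
    intro n
    have hgn : ⇑(g n) =ᵐ[μ] A.indicator ⇑(u n) + Aᶜ.indicator ⇑(v n) := combo_ae_eq (hg n)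
    have hsub : ⇑(g n - gLim) =ᵐ[μ]
        A.indicator (⇑(u n) - ⇑h₁) + Aᶜ.indicator (⇑(v n) - ⇑h₂) := by
      filter_upwards [Lp.coeFn_sub (g n) gLim, hgn, hmem.coeFn_toLp] with ω h1 h2 h3
      rw [h1, Pi.sub_apply, h2, h3]
      by_cases hAω : ω ∈ A
      · simp [Set.indicator_of_mem hAω,
          Set.indicator_of_notMem (Set.notMem_compl_iff.mpr hAω)]
      · simp [Set.indicator_of_notMem hAω, Set.indicator_of_mem (Set.mem_compl hAω)]
    have key : eLpNorm (⇑(g n - gLim)) p μ ≤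
        eLpNorm (⇑(u n) - ⇑h₁) p μ + eLpNorm (⇑(v n) - ⇑h₂) p μ := by
      calc eLpNorm (⇑(g n - gLim)) p μ
          ≤ eLpNorm (fun ω => ‖(⇑(u n) - ⇑h₁) ω‖ + ‖(⇑(v n) - ⇑h₂) ω‖) p μ := by
            apply eLpNorm_mono_ae
            filter_upwards [hsub] with ω hω
            rw [hω]
            have h0 : (0:ℝ) ≤ ‖(⇑(u n) - ⇑h₁) ω‖ + ‖(⇑(v n) - ⇑h₂) ω‖ :=
              add_nonneg (norm_nonneg _) (norm_nonneg _)
            rw [Real.norm_of_nonneg h0]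
            by_cases hAω : ω ∈ A
            · simp only [Pi.add_apply, Set.indicator_of_mem hAω,
                Set.indicator_of_notMem (Set.notMem_compl_iff.mpr hAω)]
              simpa using le_add_of_nonneg_right (norm_nonneg _)
            · simp only [Pi.add_apply, Set.indicator_of_notMem hAω,
                Set.indicator_of_mem (Set.mem_compl hAω)]
              simpa using le_add_of_nonneg_left (norm_nonneg _)
        _ ≤ eLpNorm (fun ω => ‖(⇑(u n) - ⇑h₁) ω‖) p μ
              + eLpNorm (fun ω => ‖(⇑(v n) - ⇑h₂) ω‖) p μ :=
            eLpNorm_add_le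
              (((Lp.aestronglyMeasurable (u n)).sub (Lp.aestronglyMeasurable h₁)).norm)
              (((Lp.aestronglyMeasurable (v n)).sub (Lp.aestronglyMeasurable h₂)).norm) hp1
        _ = eLpNorm (⇑(u n) - ⇑h₁) p μ + eLpNorm (⇑(v n) - ⇑h₂) p μ := by
            rw [eLpNorm_norm, eLpNorm_norm]
    have e1 : eLpNorm (⇑(u n) - ⇑h₁) p μ = eLpNorm (⇑(u n - h₁)) p μ :=
      (eLpNorm_congr_ae (Lp.coeFn_sub (u n) h₁)).symm
    have e2 : eLpNorm (⇑(v n) - ⇑h₂) p μ = eLpNorm (⇑(v n - h₂)) p μ :=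
      (eLpNorm_congr_ae (Lp.coeFn_sub (v n) h₂)).symm
    rw [e1, e2] at key
    have hfin1 : eLpNorm (⇑(u n - h₁)) p μ ≠ ∞ := Lp.eLpNorm_ne_top _
    have hfin2 : eLpNorm (⇑(v n - h₂)) p μ ≠ ∞ := Lp.eLpNorm_ne_top _
    have := ENNReal.toReal_mono (ENNReal.add_ne_top.mpr ⟨hfin1, hfin2⟩) key
    rw [ENNReal.toReal_add hfin1 hfin2] at this
    simpa [dist_eq_norm, Lp.norm_def] using this
  -- convergence
  have htend : Tendsto (fun n => g n) atTop (𝓝 gLim) := by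
    rw [tendsto_iff_dist_tendsto_zero]
    have h0 : Tendsto (fun n => dist (u n) h₁ + dist (v n) h₂) atTop (𝓝 0) := by
      simpa using (tendsto_iff_dist_tendsto_zero.mp hu).add
        (tendsto_iff_dist_tendsto_zero.mp hv)
    exact squeeze_zero (fun n => dist_nonneg) hdist h0
  exact ⟨gLim, mem_closure_of_tendsto htend (Filter.Eventually.of_forall hgM),
    combo_prop (hmem.coeFn_toLp)⟩

end Aux

/-- the generalized set-valued stochastic integral with initial values,
`∫_Θ^t 𝒢 dB`, characterized by `S²(∫_Θ^t 𝒢 dB) = dec̄ {𝒥_B^t(x,φ) : (x,φ) ∈ 𝒢}` where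
`𝒥_B^t(x,φ) = x + ∫₀^t φ dB` is an `L²`-martingale starting at `x`, is a set-valued
`𝔽`-submartingale on `[0,T]`. -/
theorem stmt_14 {Ω : Type*} {m : MeasurableSpace Ω} (μ : @MeasureTheory.Measure Ω m)
    [IsProbabilityMeasure μ]
    (d mdim : ℕ) (T : ℝ) (hT : 0 < T) (ℱ : MeasureTheory.Filtration ℝ m)
    (𝒢 : Set (EuclideanSpace ℝ (Fin d) ×
      Lp (EuclideanSpace ℝ (Fin d × Fin mdim)) 2
        (((volume : MeasureTheory.Measure ℝ).restrict (Icc 0 T)).prod μ)))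
    (h𝒢 : 𝒢.Nonempty)
    -- the stochastic-integral processes `𝒥_B^t(x,φ) = x + ∫₀^t φ dB`
    (J : (EuclideanSpace ℝ (Fin d) ×
      Lp (EuclideanSpace ℝ (Fin d × Fin mdim)) 2
        (((volume : MeasureTheory.Measure ℝ).restrict (Icc 0 T)).prod μ)) →
      ℝ → Ω → EuclideanSpace ℝ (Fin d))
    (hJ0 : ∀ q ∈ 𝒢, ∀ᵐ ω ∂μ, J q 0 ω = q.1)
    (hJmart : ∀ q ∈ 𝒢, Martingale (J q) ℱ μ)
    (hJL2 : ∀ q ∈ 𝒢, ∀ t, MemLp (J q t) 2 μ)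
    (F : ℝ → Ω → Set (EuclideanSpace ℝ (Fin d)))
    (hF : ∀ t ∈ Icc (0 : ℝ) T,
      sel (ℱ t) μ 2 (F t) = decClosure (ℱ t) μ 2
        {g : Lp (EuclideanSpace ℝ (Fin d)) 2 μ | ∃ q ∈ 𝒢, ⇑g =ᵐ[μ] J q t}) :
    ∀ s t : ℝ, 0 ≤ s → s ≤ t → t ≤ T →
      sel (ℱ s) μ 2 (F s) ⊆ closure (ceSel (ℱ s) μ 2 (sel (ℱ t) μ 2 (F t)))  := by
  intro s t hs hst htT
  have hsT : s ∈ Icc (0:ℝ) T := ⟨hs, hst.trans htT⟩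
  have htIcc : t ∈ Icc (0:ℝ) T := ⟨hs.trans hst, htT⟩
  set S := sel (ℱ t) μ 2 (F t) with hS
  -- S is decomposable w.r.t. ℱ s
  have hSdec : Decomp (ℱ s) μ 2 S := by
    intro f₁ h1 f₂ h2 A hA
    have hdt : Decomp (ℱ t) μ 2 S := by
      rw [hS, hF t htIcc]; exact decomp_decClosure (ℱ.le t) _
    exact hdt f₁ h1 f₂ h2 A (ℱ.mono hst A hA)
  -- ceSel is decomposable w.r.t. ℱ s
  have hD : Decomp (ℱ s) μ 2 (ceSel (ℱ s) μ 2 S) := by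
    intro h₁ hh₁ h₂ hh₂ A hA
    obtain ⟨f₁, hf₁S, hh₁e⟩ := hh₁
    obtain ⟨f₂, hf₂S, hh₂e⟩ := hh₂
    obtain ⟨g, hgS, hg⟩ := hSdec f₁ hf₁S f₂ hf₂S A hA
    have hAm : MeasurableSet A := ℱ.le s A hA
    have hint : ∀ f : Lp (EuclideanSpace ℝ (Fin d)) 2 μ, Integrable f μ := fun f =>
      memLp_one_iff_integrable.mp ((Lp.memLp f).mono_exponent one_le_two)
    -- conditional expectation of g
    have hce : μ[⇑g|ℱ s] =ᵐ[μ]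
        A.indicator (μ[⇑f₁|ℱ s]) + Aᶜ.indicator (μ[⇑f₂|ℱ s]) := by
      have e1 : μ[⇑g|ℱ s] =ᵐ[μ] μ[A.indicator ⇑f₁ + Aᶜ.indicator ⇑f₂|ℱ s] :=
        condExp_congr_ae (combo_ae_eq hg)
      have e2 : μ[A.indicator ⇑f₁ + Aᶜ.indicator ⇑f₂|ℱ s] =ᵐ[μ]
          μ[A.indicator ⇑f₁|ℱ s] + μ[Aᶜ.indicator ⇑f₂|ℱ s] :=
        condExp_add ((hint f₁).indicator hAm) ((hint f₂).indicator hAm.compl) _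
      have e3 : μ[A.indicator ⇑f₁|ℱ s] =ᵐ[μ] A.indicator (μ[⇑f₁|ℱ s]) :=
        condExp_indicator (hint f₁) hA
      have e4 : μ[Aᶜ.indicator ⇑f₂|ℱ s] =ᵐ[μ] Aᶜ.indicator (μ[⇑f₂|ℱ s]) :=
        condExp_indicator (hint f₂) hA.compl
      exact e1.trans (e2.trans (EventuallyEq.add e3 e4))
    have hmem := memℒp_combo h₁ h₂ hAm
    refine ⟨hmem.toLp _, ⟨g, hgS, ?_⟩, combo_prop (hmem.coeFn_toLp)⟩
    -- ⇑(toLp) =ᵐ μ[⇑g|ℱ s]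
    refine (hmem.coeFn_toLp).trans ?_
    filter_upwards [hce, hh₁e, hh₂e] with ω h1 h2 h3
    by_cases hAω : ω ∈ A <;>
      simp [h1, h2, h3, Set.indicator_of_mem, Set.indicator_of_notMem, hAω]
  -- the generator at time s is contained in ceSel
  have hMsub : {g : Lp (EuclideanSpace ℝ (Fin d)) 2 μ | ∃ q ∈ 𝒢, ⇑g =ᵐ[μ] J q s}
      ⊆ ceSel (ℱ s) μ 2 S := by
    rintro g ⟨q, hq, hgq⟩
    have hfmem := hJL2 q hq t
    refine ⟨hfmem.toLp _, ?_, ?_⟩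
    · rw [hS, hF t htIcc]
      exact subset_decClosure ⟨q, hq, hfmem.coeFn_toLp⟩
    · have e1 : μ[⇑(hfmem.toLp _)|ℱ s] =ᵐ[μ] μ[J q t|ℱ s] :=
        condExp_congr_ae (hfmem.coeFn_toLp)
      have e2 : μ[J q t|ℱ s] =ᵐ[μ] J q s := (hJmart q hq).condExp_ae_eq hst
      exact hgq.trans (e2.symm.trans e1.symm)
  rw [hF s hsT]
  exact decClosure_subset_of_mem
    ⟨hMsub.trans subset_closure, isClosed_closure, hD.closure (ℱ.le s)⟩
end
end

section
/- Let M = (M_t)_{t∈[0,T]} be a convex uniformly square-integrably bounded set-valued 𝔽-martingale in ℝ^d on the completed natural filtration of an m-dimensional Brownian motion B. Let MS(M) be the set of all square-integrable ℝ^d-valued 𝔽-martingale selectors of M, and for each f ∈ MS(M) let (x^f, φ^f) be the unique pair with f_t = x^f + ∫₀^t φ^f_τ dB_τ a.s. for all t (classical martingale representation). Set 𝒢^M = {(x^f, φ^f) : f ∈ MS(M)}. Then M_t = ∫_Θ^t 𝒢^M dB a.s. for every t ∈ [0,T], where ∫_Θ^t 𝒢 dB is the generalized set-valued stochastic integral with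 nonzero initial values, characterized by S²_{∫_Θ^t 𝒢 dB}(F_t) = dec̄{x + ∫₀^t φ dB : (x,φ) ∈ 𝒢}. -/
open MeasureTheory Set Filter Topology Bornology
open scoped ENNReal NNReal Pointwise

noncomputable section

/-- A square-integrable `ℝ^d`-valued `𝔽`-martingale selector of the set-valued process
`M` on `[0,T]`. -/
def MSelector {Ω : Type*} {m : MeasurableSpace Ω} (μ : @MeasureTheory.Measure Ω m)
    {d : ℕ} (T : ℝ) (ℱ : MeasureTheory.Filtration ℝ m)
    (M : ℝ → Ω → Set (EuclideanSpace ℝ (Fin d)))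
    (f : ℝ → Ω → EuclideanSpace ℝ (Fin d)) : Prop :=
  Martingale f ℱ μ ∧ ∀ t ∈ Icc (0 : ℝ) T, MemLp (f t) 2 μ ∧ ∀ᵐ ω ∂μ, f t ω ∈ M t ω


open scoped Classical

section KRN

variable {Ω E : Type*} [MetricSpace E] {𝒜 : MeasurableSpace Ω}

private lemma krn_ex0 {x : ℕ → E} (hx : DenseRange x) {F : Ω → Set E}
    (hne : ∀ ω, (F ω).Nonempty) (ω : Ω) :
    ∃ n, (F ω ∩ Metric.closedBall (x n) ((1/2 : ℝ) ^ 0)).Nonempty := by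
  obtain ⟨y, hy⟩ := hne ω
  obtain ⟨n, hn⟩ := hx.exists_dist_lt y (by norm_num : (0:ℝ) < 1)
  exact ⟨n, y, hy, by simpa [Metric.mem_closedBall] using hn.le⟩

private lemma krn_exs {x : ℕ → E} (hx : DenseRange x) {F : Ω → Set E} (k : ℕ) (c : E) (ω : Ω)
    (h : (F ω ∩ Metric.closedBall c ((1/2 : ℝ) ^ k)).Nonempty) :
    ∃ n, (F ω ∩ (Metric.closedBall (x n) ((1/2 : ℝ) ^ (k+1)) ∩
      Metric.closedBall c ((1/2 : ℝ) ^ k))).Nonempty := by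
  obtain ⟨y, hyF, hyc⟩ := h
  obtain ⟨n, hn⟩ := hx.exists_dist_lt y (by positivity : (0:ℝ) < (1/2 : ℝ) ^ (k+1))
  exact ⟨n, y, hyF, ⟨by simpa [Metric.mem_closedBall] using hn.le, hyc⟩⟩

private noncomputable def krnSeq {x : ℕ → E} (hx : DenseRange x) {F : Ω → Set E}
    (hne : ∀ ω, (F ω).Nonempty) :
    ∀ _ : ℕ, {f : Ω → ℕ // ∀ ω,
      (F ω ∩ Metric.closedBall (x (f ω)) ((1/2 : ℝ) ^ ‹ℕ›)).Nonempty}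
  | 0 => ⟨fun ω => Nat.find (krn_ex0 hx hne ω), fun ω => Nat.find_spec (krn_ex0 hx hne ω)⟩
  | (k+1) =>
    ⟨fun ω => Nat.find (krn_exs hx k (x ((krnSeq hx hne k).1 ω)) ω ((krnSeq hx hne k).2 ω)),
     fun ω => by
      obtain ⟨y, hyF, hy1, -⟩ :=
        Nat.find_spec (krn_exs hx k (x ((krnSeq hx hne k).1 ω)) ω ((krnSeq hx hne k).2 ω))
      exact ⟨y, hyF, hy1⟩⟩

private lemma krnSeq_chain {x : ℕ → E} (hx : DenseRange x) {F : Ω → Set E}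
    (hne : ∀ ω, (F ω).Nonempty) (k : ℕ) (ω : Ω) :
    (F ω ∩ (Metric.closedBall (x ((krnSeq hx hne (k+1)).1 ω)) ((1/2 : ℝ) ^ (k+1)) ∩
      Metric.closedBall (x ((krnSeq hx hne k).1 ω)) ((1/2 : ℝ) ^ k))).Nonempty := by
  have h := Nat.find_spec (krn_exs hx k (x ((krnSeq hx hne k).1 ω)) ω ((krnSeq hx hne k).2 ω))
  simpa only [krnSeq] using h

private lemma krnSeq_measurable {x : ℕ → E} (hx : DenseRange x) {F : Ω → Set E}
    (hne : ∀ ω, (F ω).Nonempty)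
    (hmeas : ∀ C : Set E, IsClosed C → MeasurableSet[𝒜] {ω | (F ω ∩ C).Nonempty}) :
    ∀ k, Measurable[𝒜] fun ω => (krnSeq hx hne k).1 ω := by
  intro k
  induction k with
  | zero =>
    simp only [krnSeq]
    exact measurable_find _ fun n => hmeas _ Metric.isClosed_closedBall
  | succ k ih =>
    simp only [krnSeq]
    refine measurable_find _ fun n => ?_
    have heq : {ω | (F ω ∩ (Metric.closedBall (x n) ((1/2 : ℝ) ^ (k+1)) ∩
        Metric.closedBall (x ((krnSeq hx hne k).1 ω)) ((1/2 : ℝ) ^ k))).Nonempty}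
        = ⋃ j : ℕ, ((fun ω => (krnSeq hx hne k).1 ω) ⁻¹' {j}) ∩
          {ω | (F ω ∩ (Metric.closedBall (x n) ((1/2 : ℝ) ^ (k+1)) ∩
            Metric.closedBall (x j) ((1/2 : ℝ) ^ k))).Nonempty} := by
      ext ω
      simp only [mem_setOf_eq, mem_iUnion, mem_inter_iff, mem_preimage, mem_singleton_iff]
      exact ⟨fun h => ⟨(krnSeq hx hne k).1 ω, rfl, h⟩, fun ⟨j, hj, h⟩ => by rw [hj]; exact h⟩
    rw [heq]
    exact MeasurableSet.iUnion fun j => (ih (measurableSet_singleton j)).inter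
      (hmeas _ (Metric.isClosed_closedBall.inter Metric.isClosed_closedBall))

theorem krn_selection [MeasurableSpace E] [BorelSpace E] [CompleteSpace E]
    [SecondCountableTopology E]
    (𝒜 : MeasurableSpace Ω) (F : Ω → Set E) (hne : ∀ ω, (F ω).Nonempty)
    (hcl : ∀ ω, IsClosed (F ω))
    (hmeas : ∀ C : Set E, IsClosed C → MeasurableSet[𝒜] {ω | (F ω ∩ C).Nonempty}) :
    ∃ f : Ω → E, Measurable[𝒜] f ∧ ∀ ω, f ω ∈ F ω := by
  rcases isEmpty_or_nonempty Ω with hΩ | hΩ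
  · exact ⟨fun ω => (hne ω).choose, Subsingleton.measurable, fun ω => (hne ω).choose_spec⟩
  have hE : Nonempty E := ⟨(hne (Classical.arbitrary Ω)).choose⟩
  set x : ℕ → E := TopologicalSpace.denseSeq E with hxdef
  have hx : DenseRange x := TopologicalSpace.denseRange_denseSeq E
  set g : ℕ → Ω → ℕ := fun k => (krnSeq hx hne k).1 with hg
  have hdist : ∀ ω k, dist (x (g k ω)) (x (g (k+1) ω)) ≤ 2 * (1/2 : ℝ) ^ k := by
    intro ω k
    obtain ⟨y, -, hy1, hy2⟩ := krnSeq_chain hx hne k ω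
    rw [Metric.mem_closedBall] at hy1 hy2
    have h3 : dist (x (g k ω)) (x (g (k+1) ω)) ≤
        dist y (x (g k ω)) + dist y (x (g (k+1) ω)) := dist_triangle_left _ _ _
    have h4 : (1/2 : ℝ) ^ (k+1) ≤ (1/2 : ℝ) ^ k :=
      pow_le_pow_of_le_one (by norm_num) (by norm_num) (Nat.le_succ k)
    calc dist (x (g k ω)) (x (g (k+1) ω)) ≤ _ := h3
      _ ≤ 2 * (1/2 : ℝ) ^ k := by nlinarith
  have hcau : ∀ ω, CauchySeq fun k => x (g k ω) := fun ω =>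
    cauchySeq_of_le_geometric (1/2 : ℝ) 2 (by norm_num) (fun k => by
      simpa [mul_comm] using hdist ω k)
  have hlim : ∀ ω, ∃ z, Tendsto (fun k => x (g k ω)) atTop (𝓝 z) := fun ω =>
    cauchySeq_tendsto_of_complete (hcau ω)
  choose f hf using hlim
  refine ⟨f, ?_, ?_⟩
  · refine measurable_of_tendsto_metrizable (f := fun k ω => x (g k ω))
      (fun k => (measurable_from_top (f := x)).comp (krnSeq_measurable hx hne hmeas k)) ?_
    rw [tendsto_pi_nhds]
    exact hf
  · intro ω
    rw [← (hcl ω).closure_eq]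
    rw [Metric.mem_closure_iff]
    intro ε hε
    have h1 : Tendsto (fun k => dist (x (g k ω)) (f ω)) atTop (𝓝 0) :=
      tendsto_iff_dist_tendsto_zero.mp (hf ω)
    have h2 : Tendsto (fun k : ℕ => (1/2 : ℝ) ^ k) atTop (𝓝 0) :=
      tendsto_pow_atTop_nhds_zero_of_lt_one (by norm_num) (by norm_num)
    have h3 := ((h1.eventually (gt_mem_nhds (half_pos hε))).and
      (h2.eventually (gt_mem_nhds (half_pos hε)))).exists
    obtain ⟨k, hk1, hk2⟩ := h3
    obtain ⟨y, hyF, hyB⟩ := (krnSeq hx hne k).2 ω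
    rw [Metric.mem_closedBall] at hyB
    refine ⟨y, hyF, ?_⟩
    have hyB' : dist y (x (g k ω)) ≤ (1/2 : ℝ) ^ k := hyB
    have htri : dist (f ω) y ≤ dist (f ω) (x (g k ω)) + dist y (x (g k ω)) := by
      rw [dist_comm y]; exact dist_triangle _ _ _
    have hcm : dist (f ω) (x (g k ω)) = dist (x (g k ω)) (f ω) := dist_comm _ _
    linarith

end KRN

section L2

variable {Ω X : Type*} {𝒜 : MeasurableSpace Ω} {m : MeasurableSpace Ω} [NormedAddCommGroup X]

private lemma memℒp_two_condexp (h𝒜 : 𝒜 ≤ m)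
    {μ : Measure Ω} [IsFiniteMeasure μ]
    {E' : Type*} [NormedAddCommGroup E'] [InnerProductSpace ℝ E'] [CompleteSpace E']
    {f : Ω → E'} (hf : MemLp f 2 μ) : MemLp (μ[f|𝒜]) 2 μ := by
  set gL : Lp E' 2 μ := ↑(condExpL2 E' ℝ h𝒜 (hf.toLp f)) with hgL
  have heq : ⇑gL =ᵐ[μ] μ[f|𝒜] := by
    refine ae_eq_condExp_of_forall_setIntegral_eq h𝒜 (hf.integrable one_le_two) ?_ ?_ ?_
    · intro s _ _
      exact (integrable_condExpL2_of_isFiniteMeasure h𝒜).integrableOn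
    · intro s hs hμs
      rw [hgL, integral_condExpL2_eq h𝒜 (hf.toLp f) hs hμs.ne]
      exact setIntegral_congr_ae (h𝒜 s hs) ((hf.coeFn_toLp).mono fun ω h _ => h)
    · exact aestronglyMeasurable_condExpL2 h𝒜 _
  exact (Lp.memLp gL).ae_eq heq

private lemma isClosed_sel [CompleteSpace X] (h𝒜 : 𝒜 ≤ m)
    {μ : Measure Ω} {F : Ω → Set X} (hcl : ∀ ω, IsClosed (F ω)) :
    IsClosed (sel 𝒜 μ 2 F) := by
  have h1 : IsClosed {f : Lp X 2 μ | AEStronglyMeasurable[𝒜] f μ} :=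
    isClosed_aestronglyMeasurable h𝒜
  have h2 : IsClosed {f : Lp X 2 μ | ∀ᵐ ω ∂μ, f ω ∈ F ω} := by
    refine IsSeqClosed.isClosed ?_
    intro fs f hmem htend
    have htd : Tendsto (fun n => eLpNorm (⇑(fs n) - ⇑f) 2 μ) atTop (𝓝 0) :=
      (Lp.tendsto_Lp_iff_tendsto_eLpNorm' fs f).mp htend
    have him : TendstoInMeasure μ (fun n => ⇑(fs n)) atTop ⇑f :=
      tendstoInMeasure_of_tendsto_eLpNorm (by norm_num)
        (fun n => Lp.aestronglyMeasurable _) (Lp.aestronglyMeasurable _) htd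
    obtain ⟨ns, -, hns⟩ := him.exists_seq_tendsto_ae
    have hall : ∀ᵐ ω ∂μ, ∀ k, (fs (ns k)) ω ∈ F ω := ae_all_iff.mpr fun k => hmem (ns k)
    filter_upwards [hns, hall] with ω hten hmem'
    exact (hcl ω).mem_of_tendsto hten (Eventually.of_forall fun k => hmem' k)
  exact h1.inter h2

private lemma decomp_sel (h𝒜 : 𝒜 ≤ m)
    {μ : Measure Ω} {F : Ω → Set X} : Decomp 𝒜 μ 2 (sel 𝒜 μ 2 F) := by
  rintro f₁ ⟨⟨g₁, hg₁m, hg₁e⟩, hf₁F⟩ f₂ ⟨⟨g₂, hg₂m, hg₂e⟩, hf₂F⟩ A hA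
  set h : Ω → X := A.piecewise ⇑f₁ ⇑f₂ with hh
  have haesm' : AEStronglyMeasurable[𝒜] h μ := by
    refine ⟨A.piecewise g₁ g₂, StronglyMeasurable.piecewise hA hg₁m hg₂m, ?_⟩
    filter_upwards [hg₁e, hg₂e] with ω h1 h2
    by_cases hω : ω ∈ A <;> simp [h, Set.piecewise, hω, h1, h2]
  have haesm : AEStronglyMeasurable h μ := by
    obtain ⟨g, hgm, hge⟩ := haesm'
    exact ⟨g, hgm.mono h𝒜, hge⟩
  have hbd : ∀ᵐ ω ∂μ, ‖h ω‖ ≤ ‖(‖f₁ ω‖ + ‖f₂ ω‖)‖ := by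
    refine ae_of_all _ fun ω => ?_
    have h1 : (0:ℝ) ≤ ‖f₁ ω‖ := norm_nonneg _
    have h2 : (0:ℝ) ≤ ‖f₂ ω‖ := norm_nonneg _
    rw [Real.norm_of_nonneg (by positivity)]
    by_cases hω : ω ∈ A <;> simp [h, Set.piecewise, hω] <;> linarith
  have hmem : MemLp h 2 μ :=
    MemLp.of_le ((Lp.memLp f₁).norm.add (Lp.memLp f₂).norm) haesm hbd
  refine ⟨hmem.toLp h, ⟨haesm'.congr hmem.coeFn_toLp.symm, ?_⟩, ?_⟩
  · filter_upwards [hmem.coeFn_toLp, hf₁F, hf₂F] with ω he hm1 hm2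
    rw [he]
    by_cases hω : ω ∈ A <;> simp [h, Set.piecewise, hω, hm1, hm2]
  · filter_upwards [hmem.coeFn_toLp] with ω he
    constructor
    · intro hω; rw [he]; simp [h, Set.piecewise, hω]
    · intro hω; rw [he]; simp [h, Set.piecewise, hω]

end L2

private lemma ae_subset_of_sel_subset {Ω X : Type*} {𝒜 : MeasurableSpace Ω}
    {m : MeasurableSpace Ω}
    [NormedAddCommGroup X] [CompleteSpace X] [SecondCountableTopology X]
    [MeasurableSpace X] [BorelSpace X]
    (h𝒜 : 𝒜 ≤ m) {μ : Measure Ω} [IsFiniteMeasure μ]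
    {F G : Ω → Set X} (hF : IsSVRV 𝒜 F) (hG : IsSVRV 𝒜 G)
    {g₀ : Ω → X} (hg₀m : Measurable[𝒜] g₀) (hg₀L : MemLp g₀ 2 μ)
    (hg₀F : ∀ᵐ ω ∂μ, g₀ ω ∈ F ω)
    (hsel : ∀ f : Ω → X, Measurable[𝒜] f → MemLp f 2 μ → (∀ᵐ ω ∂μ, f ω ∈ F ω) →
      ∀ᵐ ω ∂μ, f ω ∈ G ω) :
    ∀ᵐ ω ∂μ, F ω ⊆ G ω := by
  rcases isEmpty_or_nonempty Ω with hΩ | hΩ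
  · exact ae_of_all _ fun ω => (IsEmpty.false ω).elim
  have hX : Nonempty X := ⟨(hF.1 (Classical.arbitrary Ω)).1.choose⟩
  set x : ℕ → X := TopologicalSpace.denseSeq X with hxdef
  have hx : DenseRange x := TopologicalSpace.denseRange_denseSeq X
  set A : ℕ → ℕ → Set Ω := fun n k =>
    {ω | (F ω ∩ Metric.closedBall (x n) (1/(k+1) : ℝ)).Nonempty} ∩
    {ω | (G ω ∩ Metric.closedBall (x n) (3/(k+1) : ℝ)).Nonempty}ᶜ with hA
  have hA0 : ∀ n k, μ (A n k) = 0 := by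
    intro n k
    have hAmeas : MeasurableSet[𝒜] (A n k) :=
      (hF.2 _ Metric.isClosed_closedBall).inter (hG.2 _ Metric.isClosed_closedBall).compl
    set H : Ω → Set X := fun ω =>
      if ω ∈ A n k then F ω ∩ Metric.closedBall (x n) (1/(k+1) : ℝ) else {g₀ ω} with hH
    have hHne : ∀ ω, (H ω).Nonempty := by
      intro ω
      by_cases hω : ω ∈ A n k
      · simpa [H, hω] using hω.1
      · simp [H, hω]
    have hHcl : ∀ ω, IsClosed (H ω) := by
      intro ω
      by_cases hω : ω ∈ A n k
      · simpa [H, hω] using ((hF.1 ω).2.inter Metric.isClosed_closedBall)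
      · simp only [H, hω, if_neg, if_false]
        exact isClosed_singleton
    have hHmeas : ∀ C : Set X, IsClosed C → MeasurableSet[𝒜] {ω | (H ω ∩ C).Nonempty} := by
      intro C hC
      have heq : {ω | (H ω ∩ C).Nonempty} =
          (A n k ∩ {ω | (F ω ∩ (Metric.closedBall (x n) (1/(k+1) : ℝ) ∩ C)).Nonempty}) ∪
          ((A n k)ᶜ ∩ g₀ ⁻¹' C) := by
        ext ω
        by_cases hω : ω ∈ A n k <;>
          simp [H, hω, Set.inter_assoc, Set.singleton_inter_nonempty]
      rw [heq]
      exact ((hAmeas.inter (hF.2 _ (Metric.isClosed_closedBall.inter hC)))).union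
        (hAmeas.compl.inter (hg₀m hC.measurableSet))
    obtain ⟨f, hfm, hfH⟩ := krn_selection 𝒜 H hHne hHcl hHmeas
    have hfF : ∀ᵐ ω ∂μ, f ω ∈ F ω := by
      filter_upwards [hg₀F] with ω h
      have := hfH ω
      by_cases hω : ω ∈ A n k
      · rw [hH] at this; simp only [if_pos hω] at this; exact this.1
      · rw [hH] at this; simp only [if_neg hω] at this
        simp only [Set.mem_singleton_iff] at this
        rw [this]; exact h
    have hr1 : (1/((k:ℝ)+1)) ≤ 1 := by
      rw [div_le_one (by positivity)]; linarith [Nat.cast_nonneg (α := ℝ) k]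
    have hfL : MemLp f 2 μ := by
      refine MemLp.of_le (hg₀L.norm.add (memLp_const (‖x n‖ + 1)))
        ((hfm.mono h𝒜 le_rfl).stronglyMeasurable.aestronglyMeasurable) ?_
      refine ae_of_all _ fun ω => ?_
      have hnn : (0:ℝ) ≤ ‖g₀ ω‖ + (‖x n‖ + 1) := by positivity
      simp only [Pi.add_apply]
      rw [Real.norm_of_nonneg hnn]
      have := hfH ω
      by_cases hω : ω ∈ A n k
      · rw [hH] at this; simp only [if_pos hω] at this
        have hball := this.2
        rw [Metric.mem_closedBall, dist_eq_norm] at hball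
        have : ‖f ω‖ ≤ ‖x n‖ + ‖f ω - x n‖ := by
          calc ‖f ω‖ = ‖x n + (f ω - x n)‖ := by congr 1; abel
            _ ≤ ‖x n‖ + ‖f ω - x n‖ := norm_add_le _ _
        have hg0 : (0:ℝ) ≤ ‖g₀ ω‖ := norm_nonneg _
        linarith
      · rw [hH] at this; simp only [if_neg hω, Set.mem_singleton_iff] at this
        rw [this]
        have : (0:ℝ) ≤ ‖x n‖ + 1 := by positivity
        linarith
    have hfG := hsel f hfm hfL hfF
    have hnotA : ∀ᵐ ω ∂μ, ω ∉ A n k := by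
      filter_upwards [hfG] with ω hGmem
      intro hω
      have hfHω := hfH ω
      rw [hH] at hfHω; simp only [if_pos hω] at hfHω
      have hball := hfHω.2
      have h3 : f ω ∈ Metric.closedBall (x n) (3/(k+1) : ℝ) := by
        rw [Metric.mem_closedBall] at hball ⊢
        have hp : (0:ℝ) < (k:ℝ)+1 := by positivity
        have : (1/((k:ℝ)+1)) ≤ 3/((k:ℝ)+1) := by
          rw [div_le_div_iff_of_pos_right hp]; norm_num
        linarith
      exact hω.2 ⟨f ω, hGmem, h3⟩
    rw [measure_eq_zero_iff_ae_notMem]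
    exact hnotA
  have hae : ∀ᵐ ω ∂μ, ∀ n k, ω ∉ A n k :=
    ae_all_iff.mpr fun n => ae_all_iff.mpr fun k => measure_eq_zero_iff_ae_notMem.mp (hA0 n k)
  filter_upwards [hae] with ω hω
  intro y hyF
  by_contra hyG
  have hGne := (hG.1 ω).1
  have hGcl := (hG.1 ω).2
  have hδpos : 0 < Metric.infDist y (G ω) := (hGcl.notMem_iff_infDist_pos hGne).mp hyG
  obtain ⟨k, hk⟩ := exists_nat_one_div_lt (show (0:ℝ) < Metric.infDist y (G ω)/4 by linarith)
  obtain ⟨n, hn⟩ := hx.exists_dist_lt y (show (0:ℝ) < 1/(k+1) by positivity)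
  have hfirst : (F ω ∩ Metric.closedBall (x n) (1/(k+1) : ℝ)).Nonempty :=
    ⟨y, hyF, by rw [Metric.mem_closedBall]; exact hn.le⟩
  have hsecond : (G ω ∩ Metric.closedBall (x n) (3/(k+1) : ℝ)).Nonempty := by
    by_contra hsec
    exact hω n k ⟨hfirst, hsec⟩
  obtain ⟨z, hzG, hzB⟩ := hsecond
  rw [Metric.mem_closedBall] at hzB
  have h1 : Metric.infDist y (G ω) ≤ dist y z := Metric.infDist_le_dist_of_mem hzG
  have h2 : dist y z ≤ dist y (x n) + dist (x n) z := dist_triangle _ _ _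
  have h3 : dist (x n) z = dist z (x n) := dist_comm _ _
  have h4 : (3:ℝ)/(k+1) = 3 * (1/(k+1)) := by ring
  linarith [hn, hzB]

/-- Set-valued martingale representation with nonzero initial values:
for a convex uniformly square-integrably bounded set-valued `𝔽`-martingale `M` on `[0,T]`,
letting `𝒢^M = {(x^f, φ^f) : f ∈ MS(M)}` be the set of classical martingale-representation
pairs of the martingale selectors of `M`, the set-valued process `I` characterized by
`S²_{I_t}(ℱ t) = dec̄ {x + ∫₀^t φ dB : (x,φ) ∈ 𝒢^M}` satisfies `M_t = I_t` a.s. for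
every `t ∈ [0,T]`. -/
theorem stmt_16 {Ω : Type*} {m : MeasurableSpace Ω} (μ : @MeasureTheory.Measure Ω m)
    [IsProbabilityMeasure μ]
    (d mdim : ℕ) (T : ℝ) (hT : 0 < T) (ℱ : MeasureTheory.Filtration ℝ m)
    (M : ℝ → Ω → Set (EuclideanSpace ℝ (Fin d)))
    (hsv : ∀ t ∈ Icc (0 : ℝ) T, IsSVRV (ℱ t) (M t))
    (hconv : ∀ t ω, Convex ℝ (M t ω))
    (hbdd : ∃ ρ : Ω → ℝ, MemLp ρ 2 μ ∧
      ∀ t ∈ Icc (0 : ℝ) T, ∀ ω, ∀ x ∈ M t ω, ‖x‖ ≤ ρ ω)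
    (hmart : ∀ s t : ℝ, 0 ≤ s → s ≤ t → t ≤ T →
      sel (ℱ s) μ 2 (M s) = closure (ceSel (ℱ s) μ 2 (sel (ℱ t) μ 2 (M t))))
    -- the stochastic-integral processes `𝒥_B^t(x,φ) = x + ∫₀^t φ dB`
    (J : (EuclideanSpace ℝ (Fin d) ×
      Lp (EuclideanSpace ℝ (Fin d × Fin mdim)) 2
        (((volume : MeasureTheory.Measure ℝ).restrict (Icc 0 T)).prod μ)) →
      ℝ → Ω → EuclideanSpace ℝ (Fin d))
    (hJ0 : ∀ q, ∀ᵐ ω ∂μ, J q 0 ω = q.1)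
    (hJmart : ∀ q, Martingale (J q) ℱ μ)
    (hJL2 : ∀ q, ∀ t, MemLp (J q t) 2 μ)
    -- the classical martingale representation theorem: every martingale selector is
    -- represented by exactly one pair `(x, φ)`
    (hrep : ∀ f, MSelector μ T ℱ M f →
      ∃! q : EuclideanSpace ℝ (Fin d) ×
        Lp (EuclideanSpace ℝ (Fin d × Fin mdim)) 2
          (((volume : MeasureTheory.Measure ℝ).restrict (Icc 0 T)).prod μ),
        ∀ t ∈ Icc (0 : ℝ) T, f t =ᵐ[μ] J q t)
    (𝒢 : Set (EuclideanSpace ℝ (Fin d) ×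
      Lp (EuclideanSpace ℝ (Fin d × Fin mdim)) 2
        (((volume : MeasureTheory.Measure ℝ).restrict (Icc 0 T)).prod μ)))
    (h𝒢 : 𝒢 = {q | ∃ f, MSelector μ T ℱ M f ∧ ∀ t ∈ Icc (0 : ℝ) T, f t =ᵐ[μ] J q t})
    -- the generalized set-valued stochastic integral `I t = ∫_Θ^t 𝒢^M dB`
    (I : ℝ → Ω → Set (EuclideanSpace ℝ (Fin d)))
    (hI : ∀ t ∈ Icc (0 : ℝ) T, IsSVRV (ℱ t) (I t) ∧
      sel (ℱ t) μ 2 (I t) = decClosure (ℱ t) μ 2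
        {g : Lp (EuclideanSpace ℝ (Fin d)) 2 μ | ∃ q ∈ 𝒢, ⇑g =ᵐ[μ] J q t}) :
    ∀ t ∈ Icc (0 : ℝ) T, ∀ᵐ ω ∂μ, M t ω = I t ω := by
  intro t ht
  classical
  obtain ⟨ρ, hρL, hρbd⟩ := hbdd
  have hsvt := hsv t ht
  have hMne : ∀ ω, (M t ω).Nonempty := fun ω => (hsvt.1 ω).1
  have hMcl : ∀ ω, IsClosed (M t ω) := fun ω => (hsvt.1 ω).2
  set gen : Set (Lp (EuclideanSpace ℝ (Fin d)) 2 μ) :=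
    {g | ∃ q ∈ 𝒢, ⇑g =ᵐ[μ] J q t} with hgen
  -- (A) the generators are selections of `M t`
  have hsub1 : gen ⊆ sel (ℱ t) μ 2 (M t) := by
    rintro g ⟨q, hq𝒢, hge⟩
    rw [h𝒢] at hq𝒢
    obtain ⟨f, hfsel, hfe⟩ := hq𝒢
    have h1 : ⇑g =ᵐ[μ] f t := hge.trans (hfe t ht).symm
    refine ⟨⟨f t, hfsel.1.1 t, h1⟩, ?_⟩
    filter_upwards [h1, (hfsel.2 t ht).2] with ω h2 h3
    rw [h2]; exact h3
  have hclosed : IsClosed (sel (ℱ t) μ 2 (M t)) := isClosed_sel (ℱ.le t) hMcl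
  have hdecomp : Decomp (ℱ t) μ 2 (sel (ℱ t) μ 2 (M t)) := decomp_sel (ℱ.le t)
  have hdec_sub : decClosure (ℱ t) μ 2 gen ⊆ sel (ℱ t) μ 2 (M t) :=
    sInter_subset_of_mem ⟨hsub1, hclosed, hdecomp⟩
  -- (B) conditional expectations of selections of `M T` are generators
  have hce : ceSel (ℱ t) μ 2 (sel (ℱ T) μ 2 (M T)) ⊆ gen := by
    rintro h ⟨h', hh'sel, hhae⟩
    have hL2 : ∀ s : ℝ, MemLp (μ[⇑h'|ℱ s]) 2 μ :=
      fun s => memℒp_two_condexp (ℱ.le s) (Lp.memLp h')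
    have hmem : ∀ s ∈ Icc (0:ℝ) T, ∀ᵐ ω ∂μ, (μ[⇑h'|ℱ s]) ω ∈ M s ω := by
      intro s hs
      have hLs := hL2 s
      have hmem' : (hLs.toLp _) ∈ ceSel (ℱ s) μ 2 (sel (ℱ T) μ 2 (M T)) :=
        ⟨h', hh'sel, hLs.coeFn_toLp⟩
      have hmem'' : (hLs.toLp _) ∈ sel (ℱ s) μ 2 (M s) := by
        rw [hmart s T hs.1 hs.2 le_rfl]
        exact subset_closure hmem'
      filter_upwards [hmem''.2, hLs.coeFn_toLp] with ω h1 h2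
      rw [← h2]; exact h1
    have hms : MSelector μ T ℱ M (fun s => μ[⇑h'|ℱ s]) :=
      ⟨martingale_condExp _ ℱ μ, fun s hs => ⟨hL2 s, hmem s hs⟩⟩
    obtain ⟨q, hq, -⟩ := hrep _ hms
    refine ⟨q, ?_, ?_⟩
    · rw [h𝒢]; exact ⟨_, hms, hq⟩
    · exact hhae.trans (hq t ht)
  have hgen_sub : gen ⊆ decClosure (ℱ t) μ 2 gen := subset_sInter fun N hN => hN.1
  have hdec_closed : IsClosed (decClosure (ℱ t) μ 2 gen) :=
    isClosed_sInter fun N hN => hN.2.1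
  have hsub2 : sel (ℱ t) μ 2 (M t) ⊆ decClosure (ℱ t) μ 2 gen := by
    rw [hmart t T ht.1 ht.2 le_rfl]
    exact closure_minimal (fun h hh => hgen_sub (hce hh)) hdec_closed
  have hMdec : sel (ℱ t) μ 2 (M t) = decClosure (ℱ t) μ 2 gen :=
    Subset.antisymm hsub2 hdec_sub
  have hself : sel (ℱ t) μ 2 (M t) = sel (ℱ t) μ 2 (I t) := by
    rw [(hI t ht).2]
    exact hMdec
  -- transfer results between `M t` and `I t` through the equal selection sets
  have htransMI : ∀ f : Ω → EuclideanSpace ℝ (Fin d), Measurable[ℱ t] f → MemLp f 2 μ →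
      (∀ᵐ ω ∂μ, f ω ∈ M t ω) → ∀ᵐ ω ∂μ, f ω ∈ I t ω := by
    intro f hm hL hmm
    have hsel1 : (hL.toLp f) ∈ sel (ℱ t) μ 2 (M t) := by
      refine ⟨⟨f, hm.stronglyMeasurable, hL.coeFn_toLp⟩, ?_⟩
      filter_upwards [hL.coeFn_toLp, hmm] with ω h1 h2
      rw [h1]; exact h2
    rw [hself] at hsel1
    filter_upwards [hsel1.2, hL.coeFn_toLp] with ω h1 h2
    rw [← h2]; exact h1
  have htransIM : ∀ f : Ω → EuclideanSpace ℝ (Fin d), Measurable[ℱ t] f → MemLp f 2 μ →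
      (∀ᵐ ω ∂μ, f ω ∈ I t ω) → ∀ᵐ ω ∂μ, f ω ∈ M t ω := by
    intro f hm hL hmm
    have hsel1 : (hL.toLp f) ∈ sel (ℱ t) μ 2 (I t) := by
      refine ⟨⟨f, hm.stronglyMeasurable, hL.coeFn_toLp⟩, ?_⟩
      filter_upwards [hL.coeFn_toLp, hmm] with ω h1 h2
      rw [h1]; exact h2
    rw [← hself] at hsel1
    filter_upwards [hsel1.2, hL.coeFn_toLp] with ω h1 h2
    rw [← h2]; exact h1
  -- a square-integrable measurable selection of `M t`
  obtain ⟨f₀, hf₀m, hf₀F⟩ := krn_selection (ℱ t) (M t) hMne hMcl hsvt.2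
  have hf₀L : MemLp f₀ 2 μ := by
    refine MemLp.of_le hρL
      ((hf₀m.mono (ℱ.le t) le_rfl).stronglyMeasurable.aestronglyMeasurable) ?_
    refine ae_of_all _ fun ω => ?_
    calc ‖f₀ ω‖ ≤ ρ ω := hρbd t ht ω (f₀ ω) (hf₀F ω)
      _ ≤ |ρ ω| := le_abs_self _
      _ = ‖ρ ω‖ := (Real.norm_eq_abs _).symm
  have hf₀I : ∀ᵐ ω ∂μ, f₀ ω ∈ I t ω := htransMI f₀ hf₀m hf₀L (ae_of_all _ hf₀F)
  have hMI : ∀ᵐ ω ∂μ, M t ω ⊆ I t ω :=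
    ae_subset_of_sel_subset (ℱ.le t) (hsv t ht) (hI t ht).1 hf₀m hf₀L
      (ae_of_all _ hf₀F) htransMI
  have hIM : ∀ᵐ ω ∂μ, I t ω ⊆ M t ω :=
    ae_subset_of_sel_subset (ℱ.le t) (hI t ht).1 (hsv t ht) hf₀m hf₀L hf₀I htransIM
  filter_upwards [hMI, hIM] with ω h1 h2
  exact Subset.antisymm h1 h2
end
end

section
/- Let M be a convex uniformly square-integrably bounded set-valued 𝔽-martingale on [0,T] with values in K_bc(ℝ^d). Then for each t ∈ [0,T], the set S²_{M_t}(F_t) of square-integrable F_t-measurable selections of M_t equals the closed decomposable hull (in L²(Ω, F_t; ℝ^d)) of the set P_t[MS(M)] = {f_t : f ∈ MS(M)} of time-t values of square-integrable martingale selectors of M. -/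
open MeasureTheory Set Filter Topology Bornology
open scoped ENNReal NNReal Pointwise

noncomputable section

/-- Auxiliary: `condexpL2` agrees a.e. with the conditional expectation. -/
lemma condexpL2_ae_eq_condexp' {Ω : Type*} {m m' : MeasurableSpace Ω}
    (hm : m' ≤ m) (μ : @MeasureTheory.Measure Ω m) [IsFiniteMeasure μ]
    {E : Type*} [NormedAddCommGroup E] [InnerProductSpace ℝ E] [CompleteSpace E]
    (h : Lp E 2 μ) :
    ⇑(MeasureTheory.condExpL2 E ℝ hm h : Lp E 2 μ) =ᵐ[μ] μ[⇑h|m'] := by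
  refine ae_eq_condExp_of_forall_setIntegral_eq hm
    (MemLp.integrable one_le_two (Lp.memLp h))
    (fun s _ hμs => integrableOn_condExpL2_of_measure_ne_top hm hμs.ne h)
    (fun s hs hμs => ?_)
    (aestronglyMeasurable_condExpL2 hm h)
  exact integral_condExpL2_eq hm h hs hμs.ne

/-- Auxiliary: the set of a.e.-membership constraints is closed in `Lp`. -/
lemma isClosed_ae_mem' {Ω : Type*} {m : MeasurableSpace Ω} (μ : @MeasureTheory.Measure Ω m)
    {E : Type*} [NormedAddCommGroup E] (F : Ω → Set E) (hF : ∀ ω, IsClosed (F ω)) :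
    IsClosed {f : Lp E 2 μ | ∀ᵐ ω ∂μ, f ω ∈ F ω} := by
  refine IsSeqClosed.isClosed ?_
  intro g y hg hy
  obtain ⟨ns, _, hae⟩ :=
    (tendstoInMeasure_of_tendsto_Lp (μ := μ) (f := g) hy).exists_seq_tendsto_ae
  have hall : ∀ᵐ ω ∂μ, ∀ n, g (ns n) ω ∈ F ω := ae_all_iff.mpr fun n => hg (ns n)
  filter_upwards [hae, hall] with ω h1 h2
  exact (hF ω).mem_of_tendsto h1 (Eventually.of_forall h2)

/-- Kisielewicz 2014, Prop. 3.1: for a convex uniformly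
square-integrably bounded set-valued `𝔽`-martingale `M` on `[0,T]` with bounded closed
convex values, `S²_{M_t}(ℱ t)` equals the closed decomposable hull of the `t`-sections
`{f_t : f ∈ MS(M)}` of the square-integrable martingale selectors of `M`. -/
theorem stmt_17 {Ω : Type*} {m : MeasurableSpace Ω} (μ : @MeasureTheory.Measure Ω m)
    [IsProbabilityMeasure μ]
    (d : ℕ) (T : ℝ) (hT : 0 < T) (ℱ : MeasureTheory.Filtration ℝ m)
    (M : ℝ → Ω → Set (EuclideanSpace ℝ (Fin d)))
    (hsv : ∀ t ∈ Icc (0 : ℝ) T, IsSVRV (ℱ t) (M t))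
    (hval : ∀ t ω, IsBounded (M t ω) ∧ Convex ℝ (M t ω))
    (hbdd : ∃ ρ : Ω → ℝ, MemLp ρ 2 μ ∧
      ∀ t ∈ Icc (0 : ℝ) T, ∀ ω, ∀ x ∈ M t ω, ‖x‖ ≤ ρ ω)
    (hmart : ∀ s t : ℝ, 0 ≤ s → s ≤ t → t ≤ T →
      sel (ℱ s) μ 2 (M s) = closure (ceSel (ℱ s) μ 2 (sel (ℱ t) μ 2 (M t)))) :
    ∀ t ∈ Icc (0 : ℝ) T,
      sel (ℱ t) μ 2 (M t) = decClosure (ℱ t) μ 2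
        {g : Lp (EuclideanSpace ℝ (Fin d)) 2 μ |
          ∃ f, MSelector μ T ℱ M f ∧ ⇑g =ᵐ[μ] f t} := by
  classical
  intro t ht
  obtain ⟨ht0, htT⟩ := ht
  have hE : True := trivial
  set S : Set (Lp (EuclideanSpace ℝ (Fin d)) 2 μ) :=
    {g : Lp (EuclideanSpace ℝ (Fin d)) 2 μ | ∃ f, MSelector μ T ℱ M f ∧ ⇑g =ᵐ[μ] f t} with hSdef
  -- Key step: every conditional expectation at time `t` of a selection of `M T`
  -- is the time-`t` value of a square-integrable martingale selector of `M`.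
  have hkey : ceSel (ℱ t) μ 2 (sel (ℱ T) μ 2 (M T)) ⊆ S := by
    rintro v ⟨h, hh, hv⟩
    refine ⟨fun s => μ[⇑h|ℱ s], ⟨martingale_condExp (⇑h) ℱ μ, ?_⟩, hv⟩
    intro s hs
    have hg : ⇑(MeasureTheory.condExpL2 (EuclideanSpace ℝ (Fin d)) ℝ (ℱ.le s) h : Lp (EuclideanSpace ℝ (Fin d)) 2 μ) =ᵐ[μ] μ[⇑h|ℱ s] :=
      condexpL2_ae_eq_condexp' (ℱ.le s) μ h
    have hmem : (MeasureTheory.condExpL2 (EuclideanSpace ℝ (Fin d)) ℝ (ℱ.le s) h : Lp (EuclideanSpace ℝ (Fin d)) 2 μ) ∈ sel (ℱ s) μ 2 (M s) := by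
      rw [hmart s T hs.1 hs.2 le_rfl]
      exact subset_closure ⟨h, hh, hg⟩
    refine ⟨(Lp.memLp _).ae_eq hg, ?_⟩
    filter_upwards [hmem.2, hg] with ω h1 h2
    exact h2 ▸ h1
  -- Inclusion ⊆ : via the martingale property at `(t, T)`.
  have hsub1 : sel (ℱ t) μ 2 (M t) ⊆ decClosure (ℱ t) μ 2 S := by
    rw [hmart t T ht0 htT le_rfl]
    intro x hx
    refine Set.mem_sInter.mpr fun N hN => ?_
    exact hN.2.1.closure_subset_iff.mpr (hkey.trans hN.1) hx
  -- Inclusion ⊇ : `sel` is itself a closed decomposable set containing `S`.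
  have hS_sub : S ⊆ sel (ℱ t) μ 2 (M t) := by
    rintro g ⟨f, ⟨hfm, hfsel⟩, hgf⟩
    obtain ⟨_, hmem⟩ := hfsel t ⟨ht0, htT⟩
    refine ⟨⟨f t, hfm.1 t, hgf⟩, ?_⟩
    filter_upwards [hgf, hmem] with ω h1 h2
    exact h1 ▸ h2
  have hclosed : IsClosed (sel (ℱ t) μ 2 (M t)) := by
    have h1 : IsClosed {f : Lp (EuclideanSpace ℝ (Fin d)) 2 μ | AEStronglyMeasurable[ℱ t] f μ} :=
      isClosed_aestronglyMeasurable (ℱ.le t)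
    have h2 : IsClosed {f : Lp (EuclideanSpace ℝ (Fin d)) 2 μ | ∀ᵐ ω ∂μ, f ω ∈ M t ω} :=
      isClosed_ae_mem' μ (M t) fun ω => ((hsv t ⟨ht0, htT⟩).1 ω).2
    exact h1.inter h2
  have hdecomp : Decomp (ℱ t) μ 2 (sel (ℱ t) μ 2 (M t)) := by
    rintro f₁ ⟨hf₁m, hf₁mem⟩ f₂ ⟨hf₂m, hf₂mem⟩ A hA
    have hAm : MeasurableSet A := ℱ.le t A hA
    have hk : MemLp (A.piecewise ⇑f₁ ⇑f₂) 2 μ := by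
      have : A.piecewise ⇑f₁ ⇑f₂ = A.indicator ⇑f₁ + Aᶜ.indicator ⇑f₂ := by
        funext ω
        by_cases hω : ω ∈ A <;>
          simp [Set.piecewise, Set.indicator, hω]
      rw [this]
      exact ((Lp.memLp f₁).indicator hAm).add ((Lp.memLp f₂).indicator hAm.compl)
    refine ⟨hk.toLp _, ⟨?_, ?_⟩, ?_⟩
    · obtain ⟨φ₁, hφ₁m, hφ₁⟩ := hf₁m
      obtain ⟨φ₂, hφ₂m, hφ₂⟩ := hf₂m
      refine ⟨A.piecewise φ₁ φ₂, StronglyMeasurable.piecewise hA hφ₁m hφ₂m, ?_⟩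
      filter_upwards [hk.coeFn_toLp, hφ₁, hφ₂] with ω h0 h1 h2
      rw [h0]
      by_cases hω : ω ∈ A
      · rw [Set.piecewise_eq_of_mem _ _ _ hω, Set.piecewise_eq_of_mem _ _ _ hω, h1]
      · rw [Set.piecewise_eq_of_notMem _ _ _ hω, Set.piecewise_eq_of_notMem _ _ _ hω, h2]
    · filter_upwards [hk.coeFn_toLp, hf₁mem, hf₂mem] with ω h0 h1 h2
      rw [h0]
      by_cases hω : ω ∈ A
      · rw [Set.piecewise_eq_of_mem _ _ _ hω]; exact h1
      · rw [Set.piecewise_eq_of_notMem _ _ _ hω]; exact h2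
    · filter_upwards [hk.coeFn_toLp] with ω h0
      constructor
      · intro hω; rw [h0, Set.piecewise_eq_of_mem _ _ _ hω]
      · intro hω; rw [h0, Set.piecewise_eq_of_notMem _ _ _ hω]
  have hsub2 : decClosure (ℱ t) μ 2 S ⊆ sel (ℱ t) μ 2 (M t) :=
    Set.sInter_subset_of_mem ⟨hS_sub, hclosed, hdecomp⟩
  exact hsub1.antisymm hsub2
end
end
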